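/- Let C ⊆ F_q^n be a code of size M with minimum b-symbol distance d, and let C_H be the concatenation of C with the q-ary simplex code of parameters [(q^b-1)/(q-1), b, q^{b-1}]: C_H = {(Φ(c̄_0), ..., Φ(c̄_{n-1})) : c ∈ C}, where c̄_i = (c_i,...,c_{i+b-1}) (indices mod n) and Φ(x) = x·G_s for a generator matrix G_s of the simplex code. Then C_H is a code over F_q of length (q^b-1)n/(q-1), size M, and minimum Hamming distance q^{b-1}·d. -/

import Mathlib

open Finset Matrix

/-- Cyclic coordinate access: `cget z k` is the coordinate `z_k`, indices taken mod `n`. -/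
def cget {Fq : Type*} [Zero Fq] {n : ℕ} (y : Fin n → Fq) (k : ℕ) : Fq :=
  if h : n = 0 then 0 else y ⟨k % n, Nat.mod_lt k (Nat.pos_of_ne_zero h)⟩

/-- The `b`-symbol weight of a vector `y ∈ Fq^n`. -/
def wtb {Fq : Type*} [Zero Fq] [DecidableEq Fq] {n : ℕ} (b : ℕ) (y : Fin n → Fq) : ℕ :=
  ((Finset.range n).filter fun i => ∃ j : Fin b, cget y (i + j) ≠ 0).card

/-- The `b`-symbol distance on `Fq^n`. -/
def db {Fq : Type*} [Field Fq] [DecidableEq Fq] {n : ℕ} (b : ℕ) (x y : Fin n → Fq) : ℕ :=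
  wtb b (x - y)

/-!
The concatenated word of `c` is the sequence of blocks `Φ(c̄_i)`, and `Φ` is linear, so the
Hamming distance of two concatenated words is the sum over `i` of the weights of the blocks
`Φ(x̄_i - ȳ_i)`. Since the simplex code has constant weight `q^{b-1}`, a block contributes
`q^{b-1}` exactly when `x̄_i ≠ ȳ_i`, so the distance is `q^{b-1} · d_b(x, y)`: concatenation
multiplies every distance by `q^{b-1}`, and is in particular injective.
-/

lemma hammingNorm_prod {ι κ β : Type*} [Fintype ι] [Fintype κ] [Zero β] [DecidableEq β]
    (f : ι × κ → β) : hammingNorm f = ∑ i, hammingNorm fun j => f (i, j) := by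
  simp only [hammingNorm, card_filter, Fintype.sum_prod_type]

section Cyclic

variable {F : Type*} {n : ℕ}

lemma cget_val [Zero F] (y : Fin n → F) (i : Fin n) : cget y i = y i := by
  have hn : n ≠ 0 := Nat.pos_iff_ne_zero.mp i.pos
  simp [cget, hn, Nat.mod_eq_of_lt i.2]

lemma cget_sub [AddGroup F] (x y : Fin n → F) (k : ℕ) :
    cget (x - y) k = cget x k - cget y k := by
  unfold cget; split <;> simp

/-- The `b`-symbol read `c̄_i = (c_i, …, c_{i+b-1})` of `c` at position `i`, indices mod `n`. -/
def symbolWindow [Zero F] (b : ℕ) (c : Fin n → F) (i : ℕ) : Fin b → F :=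
  fun k => cget c (i + k)

lemma symbolWindow_sub [AddGroup F] (b : ℕ) (x y : Fin n → F) (i : ℕ) :
    symbolWindow b (x - y) i = symbolWindow b x i - symbolWindow b y i :=
  funext fun k => cget_sub x y (i + k)

lemma wtb_eq_card_symbolWindow_ne_zero [Zero F] [DecidableEq F] (b : ℕ) (y : Fin n → F) :
    wtb b y = #{i ∈ range n | symbolWindow b y i ≠ 0} := by
  simp only [wtb, symbolWindow, ne_eq, funext_iff, Pi.zero_apply, not_forall]

lemma eq_zero_of_wtb_eq_zero [Zero F] [DecidableEq F] {b : ℕ} (hb : 0 < b) {y : Fin n → F}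
    (h : wtb b y = 0) : y = 0 := by
  funext i
  by_contra hyi
  have hi : (i : ℕ) ∈ {i ∈ range n | ∃ j : Fin b, cget y (i + j) ≠ 0} :=
    mem_filter.mpr ⟨mem_range.mpr i.2, ⟨0, hb⟩, by simpa [cget_val] using hyi⟩
  rw [wtb, card_eq_zero] at h
  simp [h] at hi

lemma eq_of_db_eq_zero [Field F] [DecidableEq F] {b : ℕ} (hb : 0 < b) {x y : Fin n → F}
    (h : db b x y = 0) : x = y :=
  sub_eq_zero.mp (eq_zero_of_wtb_eq_zero hb h)

end Cyclic

section Encode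

variable {F : Type*} [Ring F] {n b N w : ℕ} {G : Matrix (Fin b) (Fin N) F}

/-- The concatenation of `c ∈ F^n` with the linear code generated by `G`:
the word `(c̄_0 G, …, c̄_{n-1} G)`, indexed by (position, coordinate inside the block). -/
def concatEncode (G : Matrix (Fin b) (Fin N) F) (c : Fin n → F) : Fin n × Fin N → F :=
  fun p => (symbolWindow b c p.1 ᵥ* G) p.2

lemma concatEncode_sub (x y : Fin n → F) :
    concatEncode G x - concatEncode G y = concatEncode G (x - y) := by
  funext p
  simp [concatEncode, symbolWindow_sub, sub_vecMul]

lemma hammingNorm_concatEncode [DecidableEq F]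
    (hwt : ∀ x : Fin b → F, x ≠ 0 → hammingNorm (x ᵥ* G) = w)
    (z : Fin n → F) : hammingNorm (concatEncode G z) = w * wtb b z := by
  rw [hammingNorm_prod, wtb_eq_card_symbolWindow_ne_zero, card_filter, sum_range, mul_sum]
  refine sum_congr rfl fun i _ => ?_
  change hammingNorm (symbolWindow b z i ᵥ* G) = _
  split_ifs with h
  · rw [hwt _ h, mul_one]
  · rw [not_not.mp h, zero_vecMul, hammingNorm_zero, mul_zero]

end Encode

section Distance

variable {F : Type*} [Field F] [DecidableEq F] {n b N w : ℕ} {G : Matrix (Fin b) (Fin N) F}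

lemma hammingDist_concatEncode (hwt : ∀ x : Fin b → F, x ≠ 0 → hammingNorm (x ᵥ* G) = w)
    (x y : Fin n → F) :
    hammingDist (concatEncode G x) (concatEncode G y) = w * db b x y := by
  rw [hammingDist_comm, hammingDist_eq_hammingNorm, neg_add_eq_sub, concatEncode_sub,
    hammingNorm_concatEncode hwt, db]

lemma concatEncode_injective (hb : 0 < b) (hw : w ≠ 0)
    (hwt : ∀ x : Fin b → F, x ≠ 0 → hammingNorm (x ᵥ* G) = w) :
    Function.Injective (concatEncode (n := n) G) := by
  intro x y h
  have hdb : w * db b x y = 0 := by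
    rw [← hammingDist_concatEncode hwt, h, hammingDist_self]
  exact eq_of_db_eq_zero hb ((mul_eq_zero.mp hdb).resolve_left hw)

end Distance

theorem concatenation_with_simplex_general {Fq : Type*} [Field Fq] [Fintype Fq] [DecidableEq Fq]
    {n b d N : ℕ} (hb1 : 1 ≤ b)
    (G : Fin b → Fin N → Fq)
    (hwt : ∀ x : Fin b → Fq, x ≠ 0 →
      hammingNorm (fun j : Fin N => ∑ i : Fin b, x i * G i j) = Fintype.card Fq ^ (b - 1))
    (C : Finset (Fin n → Fq))
    (hmin : ∀ x ∈ C, ∀ y ∈ C, x ≠ y → d ≤ db b x y)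
    (hex : ∃ x ∈ C, ∃ y ∈ C, x ≠ y ∧ db b x y = d) :
    ((C.image fun c : Fin n → Fq => fun p : Fin n × Fin N =>
        ∑ i : Fin b, cget c ((p.1 : ℕ) + i) * G i p.2).card = C.card) ∧
      (∀ u ∈ (C.image fun c : Fin n → Fq => fun p : Fin n × Fin N =>
          ∑ i : Fin b, cget c ((p.1 : ℕ) + i) * G i p.2),
        ∀ v ∈ (C.image fun c : Fin n → Fq => fun p : Fin n × Fin N =>
          ∑ i : Fin b, cget c ((p.1 : ℕ) + i) * G i p.2),
        u ≠ v → Fintype.card Fq ^ (b - 1) * d ≤ hammingDist u v) ∧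
      (∃ u ∈ (C.image fun c : Fin n → Fq => fun p : Fin n × Fin N =>
          ∑ i : Fin b, cget c ((p.1 : ℕ) + i) * G i p.2),
        ∃ v ∈ (C.image fun c : Fin n → Fq => fun p : Fin n × Fin N =>
          ∑ i : Fin b, cget c ((p.1 : ℕ) + i) * G i p.2),
        u ≠ v ∧ hammingDist u v = Fintype.card Fq ^ (b - 1) * d) := by
  have hdist := hammingDist_concatEncode (n := n) (G := G) hwt
  have hinj := concatEncode_injective (n := n) hb1 (pow_ne_zero _ Fintype.card_ne_zero) hwt
  refine ⟨card_image_of_injective C hinj, ?_, ?_⟩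
  · rintro _ hu _ hv huv
    obtain ⟨x, hx, rfl⟩ := mem_image.mp hu
    obtain ⟨y, hy, rfl⟩ := mem_image.mp hv
    exact (Nat.mul_le_mul_left _ (hmin x hx y hy (ne_of_apply_ne (concatEncode G) huv))).trans_eq
      (hdist x y).symm
  · obtain ⟨x, hx, y, hy, hxy, rfl⟩ := hex
    exact ⟨_, mem_image_of_mem _ hx, _, mem_image_of_mem _ hy, hinj.ne hxy, hdist x y⟩

/-- Lemma 5.1: if `C ⊆ Fq^n` has size `M` and minimum `b`-symbol distance `d`, and
`C_H` is its concatenation with the `q`-ary simplex code `[(q^b-1)/(q-1), b, q^{b-1}]`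
(with generator matrix `G`, so `Φ(x) = x·G` is an injective linear map whose nonzero
values have constant Hamming weight `q^{b-1}`), then `C_H` has length `(q^b-1)n/(q-1)`,
size `M`, and minimum Hamming distance `q^{b-1}·d`. -/
theorem concatenation_with_simplex {Fq : Type*} [Field Fq] [Fintype Fq] [DecidableEq Fq]
    {n b d N : ℕ} (hb1 : 1 ≤ b) (hbn : b ≤ n)
    (hN : N = (Fintype.card Fq ^ b - 1) / (Fintype.card Fq - 1))
    (G : Fin b → Fin N → Fq)
    (hinj : Function.Injective fun x : Fin b → Fq => fun j : Fin N => ∑ i : Fin b, x i * G i j)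
    (hwt : ∀ x : Fin b → Fq, x ≠ 0 →
      hammingNorm (fun j : Fin N => ∑ i : Fin b, x i * G i j) = Fintype.card Fq ^ (b - 1))
    (C : Finset (Fin n → Fq))
    (hmin : ∀ x ∈ C, ∀ y ∈ C, x ≠ y → d ≤ db b x y)
    (hex : ∃ x ∈ C, ∃ y ∈ C, x ≠ y ∧ db b x y = d) :
    ((C.image fun c : Fin n → Fq => fun p : Fin n × Fin N =>
        ∑ i : Fin b, cget c ((p.1 : ℕ) + i) * G i p.2).card = C.card) ∧
      (∀ u ∈ (C.image fun c : Fin n → Fq => fun p : Fin n × Fin N =>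
          ∑ i : Fin b, cget c ((p.1 : ℕ) + i) * G i p.2),
        ∀ v ∈ (C.image fun c : Fin n → Fq => fun p : Fin n × Fin N =>
          ∑ i : Fin b, cget c ((p.1 : ℕ) + i) * G i p.2),
        u ≠ v → Fintype.card Fq ^ (b - 1) * d ≤ hammingDist u v) ∧
      (∃ u ∈ (C.image fun c : Fin n → Fq => fun p : Fin n × Fin N =>
          ∑ i : Fin b, cget c ((p.1 : ℕ) + i) * G i p.2),
        ∃ v ∈ (C.image fun c : Fin n → Fq => fun p : Fin n × Fin N =>
          ∑ i : Fin b, cget c ((p.1 : ℕ) + i) * G i p.2),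
        u ≠ v ∧ hammingDist u v = Fintype.card Fq ^ (b - 1) * d) :=
  concatenation_with_simplex_general hb1 G hwt C hmin hex
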